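/- arXiv:2005.01482 — 3 statements merged into one kernel-verified Lean document; each statement's English description precedes it below -/
import Mathlib

section
/- Consider the speed observer ξ' = −D ω̂ + P − d·P_e(t) − k ω̂ with output ω̂ = ξ + k δ, applied to the system δ' = ω, ω' = −D ω + P − d·P_e(t), where D, k > 0, P, d are constants and P_e is continuous. Then ω̂(t) − ω(t) → 0 as t → ∞ for all initial conditions. -/
open Filter Real Topology

/-! The observer is built so that the unknown input `P − d·Pe(t)` cancels in the estimation
error `e = ω̂ − ω`: since `ω̂' = ξ' + k δ' = −(D + k) ω̂ + P − d·Pe + k ω`, one gets the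
autonomous linear equation `e' = −(D + k) e`, hence `e(t) = e(0) e^{−(D+k)t} → 0`. -/

theorem eq_mul_exp_of_hasDerivAt_mul {e : ℝ → ℝ} {c : ℝ}
    (he : ∀ t, HasDerivAt e (c * e t) t) (t : ℝ) : e t = e 0 * exp (c * t) := by
  have hconst : ∀ s, HasDerivAt (fun u => e u * exp (-(c * u))) 0 s := by
    intro s
    have h := (he s).mul (((hasDerivAt_id' s).const_mul c).neg.exp)
    exact h.congr_deriv (by ring)
  have h := is_const_of_deriv_eq_zero (fun u => (hconst u).differentiableAt)
    (fun u => (hconst u).deriv) t 0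
  simp only [mul_zero, neg_zero, exp_zero, mul_one] at h
  rw [← h, mul_assoc, ← exp_add, neg_add_cancel, exp_zero, mul_one]

theorem tendsto_zero_of_hasDerivAt_mul_of_neg {e : ℝ → ℝ} {c : ℝ} (hc : c < 0)
    (he : ∀ t, HasDerivAt e (c * e t) t) : Tendsto e atTop (𝓝 0) := by
  have hexp : Tendsto (fun t => exp (c * t)) atTop (𝓝 0) :=
    tendsto_exp_atBot.comp (tendsto_id.const_mul_atTop_of_neg hc)
  simpa only [← eq_mul_exp_of_hasDerivAt_mul he, mul_zero] using hexp.const_mul (e 0)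

theorem hasDerivAt_observer_error {D k P d : ℝ} {Pe δ ω ξ ωhat : ℝ → ℝ}
    (hωhat : ∀ t, ωhat t = ξ t + k * δ t)
    (hδ : ∀ t, HasDerivAt δ (ω t) t)
    (hω : ∀ t, HasDerivAt ω (-D * ω t + P - d * Pe t) t)
    (hξ : ∀ t, HasDerivAt ξ (-D * ωhat t + P - d * Pe t - k * ωhat t) t) (t : ℝ) :
    HasDerivAt (fun t => ωhat t - ω t) (-(D + k) * (ωhat t - ω t)) t := by
  simp only [hωhat] at hξ ⊢
  exact (((hξ t).add ((hδ t).const_mul k)).sub (hω t)).congr_deriv (by ring)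

theorem stmt8_general (D k P d : ℝ) (hD : 0 < D) (hk : 0 < k)
    (Pe : ℝ → ℝ)
    (δ ω ξ ωhat : ℝ → ℝ)
    (hωhat : ∀ t, ωhat t = ξ t + k * δ t)
    (hδ : ∀ t, HasDerivAt δ (ω t) t)
    (hω : ∀ t, HasDerivAt ω (-D * ω t + P - d * Pe t) t)
    (hξ : ∀ t, HasDerivAt ξ (-D * ωhat t + P - d * Pe t - k * ωhat t) t) :
    Tendsto (fun t => ωhat t - ω t) atTop (nhds 0) :=
  tendsto_zero_of_hasDerivAt_mul_of_neg (by linarith)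
    (hasDerivAt_observer_error hωhat hδ hω hξ)

/-- Speed observer convergence: for the system `δ' = ω`, `ω' = −Dω + P − d·Pe(t)` and the
observer `ξ' = −D ω̂ + P − d·Pe(t) − k ω̂`, `ω̂ = ξ + kδ` (with `D, k > 0`, `Pe` continuous),
the estimate converges: `ω̂(t) − ω(t) → 0`. -/
theorem stmt8 (D k P d : ℝ) (hD : 0 < D) (hk : 0 < k)
    (Pe : ℝ → ℝ) (hPe : Continuous Pe)
    (δ ω ξ ωhat : ℝ → ℝ)
    (hωhat : ∀ t, ωhat t = ξ t + k * δ t)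
    (hδ : ∀ t, HasDerivAt δ (ω t) t)
    (hω : ∀ t, HasDerivAt ω (-D * ω t + P - d * Pe t) t)
    (hξ : ∀ t, HasDerivAt ξ (-D * ωhat t + P - d * Pe t - k * ωhat t) t) :
    Tendsto (fun t => ωhat t - ω t) atTop (nhds 0) :=
  stmt8_general D k P d hD hk Pe δ ω ξ ωhat hωhat hδ hω hξ
end

section
/- Under the sufficient excitation assumption ∫₀^{t_c} Δ(τ)² dτ ≥ −(1/γ) ln(1−μ) with μ ∈ (0,1), γ > 0, the FTC estimator θ_FTC(t) := (1/(1 − w_c(t)))·(θ̂(t) − w_c(t) θ̂(0)), where w_c(t) := min(w(t), 1−μ), w' = −γΔ²w, w(0)=1, θ̂' = −γΔ²(θ̂ − θ), satisfies θ_FTC(t) = θ for all t ≥ t_c. -/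
/-!
Both `w` and `θ̂ - θ` solve the scalar linear equation `f' = -γΔ²f`, so each equals its initial
value times `exp (-γ ∫₀ᵗ Δ²)`. Hence `θ̂(t) - θ = (θ̂(0) - θ) w(t)`, i.e. `θ̂(t) - w(t) θ̂(0) = (1 - w(t)) θ`.
The excitation assumption makes `w(t) ≤ 1 - μ` from `t_c` on, so there the clipping is inactive and
`1 - w(t) ≥ μ > 0` may be divided out.
-/

open Real

theorem eq_mul_exp_neg_integral_of_hasDerivAt {a f : ℝ → ℝ} (ha : Continuous a)
    (hf : ∀ t, HasDerivAt f (-a t * f t) t) (t : ℝ) :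
    f t = f 0 * exp (-∫ s in (0:ℝ)..t, a s) := by
  set F : ℝ → ℝ := fun u => ∫ s in (0:ℝ)..u, a s
  -- `f · exp F` is constant: an integrating factor.
  have hconst : ∀ u, HasDerivAt (fun u => f u * exp (F u)) 0 u := fun u =>
    ((hf u).mul (ha.integral_hasStrictDerivAt 0 u).hasDerivAt.exp).congr_deriv (by ring)
  have h := is_const_of_deriv_eq_zero (fun u => (hconst u).differentiableAt)
    (fun u => (hconst u).deriv) t 0
  have hF0 : F 0 = 0 := intervalIntegral.integral_same
  rw [hF0, exp_zero, mul_one] at h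
  rw [exp_neg, ← h, mul_inv_cancel_right₀ (exp_ne_zero _)]

theorem intervalIntegral_le_of_le_right {f : ℝ → ℝ} (hf : Continuous f) (hf0 : ∀ x, 0 ≤ f x)
    {a b c : ℝ} (hbc : b ≤ c) : ∫ x in a..b, f x ≤ ∫ x in a..c, f x := by
  rw [← intervalIntegral.integral_add_adjacent_intervals (hf.intervalIntegrable a b)
    (hf.intervalIntegrable b c)]
  exact le_add_of_nonneg_right (intervalIntegral.integral_nonneg hbc fun x _ => hf0 x)

theorem exp_neg_mul_le_of_neg_inv_mul_log_le {γ x y : ℝ} (hγ : 0 < γ) (hy : 0 < y)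
    (hx : -(1 / γ) * log y ≤ x) : exp (-(γ * x)) ≤ y := by
  have : -(γ * x) ≤ log y := by
    have := mul_le_mul_of_nonneg_left hx hγ.le
    rw [← mul_assoc, mul_neg, mul_one_div_cancel hγ.ne'] at this
    linarith
  simpa [exp_log hy] using exp_le_exp.2 this

theorem one_div_one_sub_min_mul_eq {w c x x₀ θ : ℝ} (hw : w ≤ c) (hc : c < 1)
    (hx : x - θ = (x₀ - θ) * w) : 1 / (1 - min w c) * (x - min w c * x₀) = θ := by
  rw [min_eq_left hw]
  have : 1 - w ≠ 0 := by linarith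
  field_simp
  linarith

theorem stmt11_general (γ : ℝ) (hγ : 0 < γ) (Δ : ℝ → ℝ) (hΔ : Continuous Δ)
    (μ : ℝ) (hμ : μ ∈ Set.Ioo (0:ℝ) 1)
    (θ : ℝ) (θhat : ℝ → ℝ)
    (hθ : ∀ t, HasDerivAt θhat (-γ * (Δ t) ^ 2 * (θhat t - θ)) t)
    (w : ℝ → ℝ) (hw : ∀ t, HasDerivAt w (-γ * (Δ t) ^ 2 * w t) t) (hw0 : w 0 = 1)
    (tc : ℝ)
    (hSE : (∫ τ in (0:ℝ)..tc, (Δ τ) ^ 2) ≥ -(1/γ) * Real.log (1 - μ)) :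
    ∀ t, tc ≤ t →
      (1 / (1 - min (w t) (1 - μ))) * (θhat t - min (w t) (1 - μ) * θhat 0) = θ := by
  intro t ht
  have hΔsq : Continuous fun s => Δ s ^ 2 := by fun_prop
  have hsol : ∀ f : ℝ → ℝ, (∀ s, HasDerivAt f (-γ * Δ s ^ 2 * f s) s) →
      f t = f 0 * exp (-(γ * ∫ s in (0:ℝ)..t, Δ s ^ 2)) := fun f hf => by
    rw [← intervalIntegral.integral_const_mul]
    exact eq_mul_exp_neg_integral_of_hasDerivAt (a := fun s => γ * Δ s ^ 2) (by fun_prop)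
      (fun s => (hf s).congr_deriv (by ring)) t
  have hwt : w t = exp (-(γ * ∫ s in (0:ℝ)..t, Δ s ^ 2)) := by
    simpa [hw0] using hsol w hw
  have hθt := hsol (fun s => θhat s - θ) fun s => (hθ s).sub_const θ
  rw [← hwt] at hθt
  refine one_div_one_sub_min_mul_eq ?_ (by linarith [hμ.1]) hθt
  rw [hwt]
  exact exp_neg_mul_le_of_neg_inv_mul_log_le hγ (sub_pos.2 hμ.2)
    (hSE.le.trans (intervalIntegral_le_of_le_right hΔsq (fun _ => sq_nonneg _) ht))

/-- Finite-time convergence of the FTC-DREM estimator: under the sufficient excitation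
assumption `∫₀^{t_c} Δ² ≥ −(1/γ) ln(1−μ)`, the clipped estimator
`θ_FTC(t) = (θ̂(t) − w_c(t)θ̂(0))/(1 − w_c(t))`, with `w_c = min(w, 1−μ)`, recovers the
exact parameter: `θ_FTC(t) = θ` for all `t ≥ t_c`. -/
theorem stmt11 (γ : ℝ) (hγ : 0 < γ) (Δ : ℝ → ℝ) (hΔ : Continuous Δ)
    (μ : ℝ) (hμ : μ ∈ Set.Ioo (0:ℝ) 1)
    (θ : ℝ) (θhat : ℝ → ℝ)
    (hθ : ∀ t, HasDerivAt θhat (-γ * (Δ t) ^ 2 * (θhat t - θ)) t)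
    (w : ℝ → ℝ) (hw : ∀ t, HasDerivAt w (-γ * (Δ t) ^ 2 * w t) t) (hw0 : w 0 = 1)
    (tc : ℝ) (htc : 0 < tc)
    (hSE : (∫ τ in (0:ℝ)..tc, (Δ τ) ^ 2) ≥ -(1/γ) * Real.log (1 - μ)) :
    ∀ t, tc ≤ t →
      (1 / (1 - min (w t) (1 - μ))) * (θhat t - min (w t) (1 - μ) * θhat 0) = θ :=
  stmt11_general γ hγ Δ hΔ μ hμ θ θhat hθ w hw hw0 tc hSE
end

section
/- Consider θ̃ : ℝ → ℝⁿ with components θ̃ᵢ' = −γᵢ Δ(t)² θ̃ᵢ, γᵢ > 0, Δ continuous with ∫₀^∞ Δ² = ∞, and suppose Φ : ℝ → Matrix (Fin n) (Fin n) ℝ is bounded, ξ, E : ℝ → ℝⁿ satisfy E = ξ − Φθ and Ê := ξ − Φθ̂ with θ̂ − θ = θ̃. Then Ê(t) − E(t) = −Φ(t)θ̃(t) → 0 as t → ∞, and moreover ‖Ê(t) − E(t)‖ ≤ M e^{−γ_min ∫₀ᵗ Δ²} ‖θ̃(0)‖ where M bounds ‖Φ‖ and γ_min = min γᵢ. -/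
/-!
Each error component solves the scalar linear equation `θ̃ᵢ' = −γᵢ Δ² θ̃ᵢ`, so
`θ̃ᵢ(t) = e^{−γᵢ F(t)} θ̃ᵢ(0)` with `F(t) = ∫₀ᵗ Δ²`. Since `F ≥ 0` on `[0, ∞)`, every factor
`e^{−γᵢ F(t)}` is at most `e^{−γ_min F(t)}`, which bounds `‖θ̃(t)‖` in the sup norm, and the
bound on `Φ` transfers it to `Ê − E = −Φθ̃`. Divergence of `F` makes the bound tend to `0`.
-/

open Filter Real Finset
open scoped Matrix

theorem eq_exp_sub_mul_of_hasDerivAt {f A a : ℝ → ℝ} (hA : ∀ t, HasDerivAt A (a t) t)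
    (hf : ∀ t, HasDerivAt f (a t * f t) t) (s t : ℝ) :
    f t = exp (A t - A s) * f s := by
  have hconst : ∀ r, HasDerivAt (fun r => exp (-A r) * f r) 0 r := fun r =>
    (((hA r).neg.exp).mul (hf r)).congr_deriv (by ring)
  have h := is_const_of_deriv_eq_zero (fun r => (hconst r).differentiableAt)
    (fun r => (hconst r).deriv) t s
  rw [sub_eq_add_neg, exp_add, mul_assoc, ← h, ← mul_assoc, ← exp_add, add_neg_cancel,
    exp_zero, one_mul]

theorem norm_le_exp_inf'_mul_norm {ι : Type*} [Fintype ι] [Nonempty ι] {γ x y : ι → ℝ}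
    {s : ℝ} (hs : 0 ≤ s) (hy : ∀ i, y i = exp (-γ i * s) * x i) :
    ‖y‖ ≤ exp (-(univ.inf' univ_nonempty γ) * s) * ‖x‖ := by
  refine (pi_norm_le_iff_of_nonneg (by positivity)).2 fun i => ?_
  have hγ : univ.inf' univ_nonempty γ ≤ γ i := inf'_le _ (mem_univ i)
  rw [hy i, norm_mul, norm_of_nonneg (exp_pos _).le]
  exact mul_le_mul (exp_le_exp.2 (by nlinarith)) (norm_le_pi_norm x i) (norm_nonneg _)
    (exp_pos _).le

theorem nonneg_of_forall_norm_le_mul_norm {E F : Type*} [NormedAddCommGroup E] [Nontrivial E]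
    [SeminormedAddCommGroup F] {f : E → F} {M : ℝ} (h : ∀ v, ‖f v‖ ≤ M * ‖v‖) : 0 ≤ M := by
  obtain ⟨v, hv⟩ := exists_ne (0 : E)
  exact nonneg_of_mul_nonneg_left ((norm_nonneg _).trans (h v)) (norm_pos_iff.2 hv)

/-- Voltage-estimation convergence (Proposition 1): with DREM parameter errors
`θ̃ᵢ' = −γᵢΔ²θ̃ᵢ`, `∫₀^∞ Δ² = ∞`, `Φ` bounded in operator norm by `M`, `E = ξ − Φθ` and
`Ê = ξ − Φθ̂` with `θ̂ − θ = θ̃`, one has `Ê − E = −Φθ̃ → 0`, with the exponential bound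
`‖Ê(t) − E(t)‖ ≤ M e^{−γ_min ∫₀ᵗ Δ²} ‖θ̃(0)‖`, where `γ_min = minᵢ γᵢ`. -/
theorem stmt17 {n : ℕ} [NeZero n] (γ : Fin n → ℝ) (hγ : ∀ i, 0 < γ i)
    (Δ : ℝ → ℝ) (hΔ : Continuous Δ)
    (hL2 : Tendsto (fun t => ∫ τ in (0:ℝ)..t, (Δ τ) ^ 2) atTop atTop)
    (θtil : ℝ → Fin n → ℝ)
    (hθtil : ∀ i t, HasDerivAt (fun s => θtil s i) (-(γ i) * (Δ t) ^ 2 * θtil t i) t)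
    (Φ : ℝ → Matrix (Fin n) (Fin n) ℝ)
    (M : ℝ) (hΦbd : ∀ t (v : Fin n → ℝ), ‖(Φ t).mulVec v‖ ≤ M * ‖v‖)
    (E ξ Ehat θhat : ℝ → Fin n → ℝ) (θ : Fin n → ℝ)
    (hE : ∀ t, E t = ξ t - (Φ t).mulVec θ)
    (hEhat : ∀ t, Ehat t = ξ t - (Φ t).mulVec (θhat t))
    (hdiff : ∀ t, θhat t - θ = θtil t) :
    (∀ t, Ehat t - E t = -(Φ t).mulVec (θtil t)) ∧
    Tendsto (fun t => Ehat t - E t) atTop (nhds 0) ∧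
    (∀ t, 0 ≤ t → ‖Ehat t - E t‖ ≤
      M * Real.exp (-(Finset.univ.inf' Finset.univ_nonempty γ) *
        ∫ τ in (0:ℝ)..t, (Δ τ) ^ 2) * ‖θtil 0‖) := by
  set γm := univ.inf' univ_nonempty γ
  set F : ℝ → ℝ := fun t => ∫ τ in (0:ℝ)..t, (Δ τ) ^ 2
  have hF : ∀ t, HasDerivAt F ((Δ t) ^ 2) t := fun t =>
    ((hΔ.pow 2).integral_hasStrictDerivAt 0 t).hasDerivAt
  have hsol : ∀ t i, θtil t i = exp (-γ i * F t) * θtil 0 i := fun t i => by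
    simpa [F] using eq_exp_sub_mul_of_hasDerivAt (fun t => (hF t).const_mul (-γ i))
      (hθtil i) 0 t
  have herr : ∀ t, Ehat t - E t = -(Φ t).mulVec (θtil t) := fun t => by
    rw [hEhat, hE, ← hdiff t, Matrix.mulVec_sub]
    abel
  have hbound : ∀ t, 0 ≤ t → ‖Ehat t - E t‖ ≤ M * exp (-γm * F t) * ‖θtil 0‖ := fun t ht =>
    calc ‖Ehat t - E t‖ ≤ M * ‖θtil t‖ := by rw [herr, norm_neg]; exact hΦbd t _
      _ ≤ M * (exp (-γm * F t) * ‖θtil 0‖) :=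
        mul_le_mul_of_nonneg_left
          (norm_le_exp_inf'_mul_norm (intervalIntegral.integral_nonneg ht fun τ _ => sq_nonneg _)
            (hsol t))
          (nonneg_of_forall_norm_le_mul_norm (hΦbd 0))
      _ = M * exp (-γm * F t) * ‖θtil 0‖ := (mul_assoc _ _ _).symm
  have hγm : 0 < γm := (lt_inf'_iff _).2 fun i _ => hγ i
  have hdecay : Tendsto (fun t => M * exp (-γm * F t) * ‖θtil 0‖) atTop (nhds 0) := by
    simpa using ((tendsto_exp_atBot.comp
      (hL2.const_mul_atTop_of_neg (neg_neg_of_pos hγm))).const_mul M).mul_const ‖θtil 0‖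
  refine ⟨herr, tendsto_zero_iff_norm_tendsto_zero.2 ?_, hbound⟩
  exact squeeze_zero' (Eventually.of_forall fun _ => norm_nonneg _)
    ((eventually_ge_atTop 0).mono hbound) hdecay
end
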